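/- For g ∈ {3, 5, 10} there are constants C_g such that for all N ≥ 1: P_3(N) ≤ C_3·2^N, P_5(N) ≤ C_5·2^N, and P_10(N) ≤ C_10·6^N. -/
import Mathlib

set_option maxRecDepth 10000

/-- `varpi g D N` counts the integers `1 ≤ n ≤ N` for which
`u_{D,g}(n) = ∑_{i=0}^{n-1} d_i g^i` is prime. -/
def varpi (g : ℕ) (D : ℕ → ℕ) (N : ℕ) : ℕ :=
  ((Finset.Icc 1 N).filter fun n => Nat.Prime (∑ i ∈ Finset.range n, D i * g ^ i)).card

/-- Extension of a finite digit tuple to a sequence of digits (zero beyond the tuple). -/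
def digitExt {N g : ℕ} (d : Fin N → Fin g) : ℕ → ℕ :=
  fun i => if h : i < N then (d ⟨i, h⟩ : ℕ) else 0

/-- `Pcount g N` is the number of digit tuples `(d_0, …, d_{N-1}) ∈ {0,…,g-1}^N`
with `d_{N-1} ≠ 0` such that `ϖ_{D,g}(N) = N - η`, where `η = 1` if `g = 2`
and `η = 0` otherwise. -/
noncomputable def Pcount (g N : ℕ) : ℕ :=
  Nat.card {d : Fin N → Fin g //
    digitExt d (N - 1) ≠ 0 ∧ varpi g (digitExt d) N = N - (if g = 2 then 1 else 0)}

/-! ### Auxiliary definitions -/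

/-- Partial sums of the digit expansion. -/
def uD (g : ℕ) (D : ℕ → ℕ) (n : ℕ) : ℕ := ∑ i ∈ Finset.range n, D i * g ^ i

lemma uD_congr {g n : ℕ} {D D' : ℕ → ℕ} (h : ∀ i < n, D i = D' i) :
    uD g D n = uD g D' n :=
  Finset.sum_congr rfl fun i hi => by rw [h i (Finset.mem_range.mp hi)]

lemma uD_succ (g n : ℕ) (D : ℕ → ℕ) : uD g D (n + 1) = uD g D n + D n * g ^ n :=
  Finset.sum_range_succ _ _

lemma digitExt_lt {N g : ℕ} (d : Fin N → Fin g) (i : ℕ) (h : i < N) :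
    digitExt d i = d ⟨i, h⟩ := dif_pos h

lemma notPrime_of_div {k m : ℕ} (h2 : 2 ≤ k) (hk : k ∣ m) (hlt : k < m) : ¬ m.Prime := by
  intro hp
  rcases hp.eq_one_or_self_of_dvd k hk with h | h <;> omega

/-! ### The core counting lemma -/

open scoped Classical in
/-- Core counting lemma: if a weight function `Φ` on states `(u, n)` satisfies the
transfer inequality with ratio `r`, then the number of valid digit tuples extending a
fixed prefix of length `n₀` is bounded by `Φ (u(n₀)) n₀ * r ^ (N - n₀)`. -/
lemma core (g r : ℕ) (Φ : ℕ → ℕ → ℕ) (hΦ1 : ∀ u n, 1 ≤ Φ u n)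
    (H : ∀ u n, 2 ≤ n → Nat.Prime u →
      (∑ e ∈ Finset.range g, if Nat.Prime (u + e * g ^ n) then Φ (u + e * g ^ n) (n + 1) else 0)
        ≤ r * Φ u n) :
    ∀ (k n₀ N : ℕ), N = n₀ + k → 2 ≤ n₀ → ∀ p : ℕ → ℕ,
      (Finset.univ.filter (fun d : Fin N → Fin g =>
          (∀ i < n₀, digitExt d i = p i) ∧
            ∀ n ≤ N, 1 ≤ n → Nat.Prime (uD g (digitExt d) n))).card
        ≤ Φ (uD g p n₀) n₀ * r ^ k := by
  intro k
  induction k with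
  | zero =>
    intro n₀ N hN hn₀ p
    have h1 : (Finset.univ.filter (fun d : Fin N → Fin g =>
        (∀ i < n₀, digitExt d i = p i) ∧
          ∀ n ≤ N, 1 ≤ n → Nat.Prime (uD g (digitExt d) n))).card ≤ 1 := by
      apply Finset.card_le_one.mpr
      intro a ha b hb
      simp only [Finset.mem_filter, Finset.mem_univ, true_and] at ha hb
      funext i
      have hiN : (i : ℕ) < n₀ := by have := i.isLt; omega
      have ea := ha.1 i hiN
      have eb := hb.1 i hiN
      rw [digitExt_lt a i (by omega)] at ea
      rw [digitExt_lt b i (by omega)] at eb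
      simp only [Fin.eta] at ea eb
      exact Fin.val_injective (ea.trans eb.symm)
    refine h1.trans ?_
    have := hΦ1 (uD g p n₀) n₀
    simpa using this
  | succ k ih =>
    intro n₀ N hN hn₀ p
    by_cases hne : (Finset.univ.filter (fun d : Fin N → Fin g =>
        (∀ i < n₀, digitExt d i = p i) ∧
          ∀ n ≤ N, 1 ≤ n → Nat.Prime (uD g (digitExt d) n))) = ∅
    · rw [hne]
      simp
    · obtain ⟨d₀, hd₀⟩ := Finset.nonempty_iff_ne_empty.mpr hne
      simp only [Finset.mem_filter, Finset.mem_univ, true_and] at hd₀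
      obtain ⟨hpre, hval⟩ := hd₀
      have hn₀N : n₀ < N := by omega
      have hust : uD g (digitExt d₀) n₀ = uD g p n₀ := uD_congr hpre
      have hu : (uD g p n₀).Prime := hust ▸ hval n₀ (by omega) (by omega)
      have hmaps : ∀ d ∈ (Finset.univ.filter (fun d : Fin N → Fin g =>
          (∀ i < n₀, digitExt d i = p i) ∧
            ∀ n ≤ N, 1 ≤ n → Nat.Prime (uD g (digitExt d) n))),
          digitExt d n₀ ∈ Finset.range g := by
        intro d _
        rw [digitExt_lt d n₀ hn₀N]
        exact Finset.mem_range.mpr (d _).isLt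
      rw [Finset.card_eq_sum_card_fiberwise hmaps]
      have hterm : ∀ e ∈ Finset.range g,
          ((Finset.univ.filter (fun d : Fin N → Fin g =>
            (∀ i < n₀, digitExt d i = p i) ∧
              ∀ n ≤ N, 1 ≤ n → Nat.Prime (uD g (digitExt d) n))).filter
                (fun d => digitExt d n₀ = e)).card
            ≤ (if Nat.Prime (uD g p n₀ + e * g ^ n₀) then
                Φ (uD g p n₀ + e * g ^ n₀) (n₀ + 1) else 0) * r ^ k := by
        intro e _
        by_cases hpr : Nat.Prime (uD g p n₀ + e * g ^ n₀)
        · rw [if_pos hpr]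
          have hup' : uD g (fun i => if i = n₀ then e else p i) (n₀ + 1)
              = uD g p n₀ + e * g ^ n₀ := by
            rw [uD_succ]
            congr 1
            · exact uD_congr fun i hi => by simp [Nat.ne_of_lt hi]
            · simp
          refine le_trans (Finset.card_le_card ?_)
            (le_of_le_of_eq (ih (n₀ + 1) N (by omega) (by omega)
              (fun i => if i = n₀ then e else p i)) (by rw [hup']))
          intro d hd
          simp only [Finset.mem_filter, Finset.mem_univ, true_and] at hd ⊢
          obtain ⟨⟨hdpre, hdval⟩, hde⟩ := hd
          refine ⟨fun i hi => ?_, hdval⟩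
          rcases Nat.lt_succ_iff_lt_or_eq.mp hi with h | h
          · rw [hdpre i h]
            simp [Nat.ne_of_lt h]
          · subst h
            simp [hde]
        · rw [if_neg hpr]
          have hempty : ((Finset.univ.filter (fun d : Fin N → Fin g =>
              (∀ i < n₀, digitExt d i = p i) ∧
                ∀ n ≤ N, 1 ≤ n → Nat.Prime (uD g (digitExt d) n))).filter
                  (fun d => digitExt d n₀ = e)) = ∅ := by
            apply Finset.eq_empty_of_forall_notMem
            intro d hd
            simp only [Finset.mem_filter, Finset.mem_univ, true_and] at hd
            obtain ⟨⟨hdpre, hdval⟩, hde⟩ := hd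
            apply hpr
            have hP := hdval (n₀ + 1) (by omega) (by omega)
            rwa [uD_succ, uD_congr hdpre, hde] at hP
          rw [hempty]
          simp
      refine le_trans (Finset.sum_le_sum hterm) ?_
      rw [← Finset.sum_mul]
      calc (∑ e ∈ Finset.range g, if Nat.Prime (uD g p n₀ + e * g ^ n₀) then
              Φ (uD g p n₀ + e * g ^ n₀) (n₀ + 1) else 0) * r ^ k
          ≤ (r * Φ (uD g p n₀) n₀) * r ^ k :=
            Nat.mul_le_mul_right _ (H (uD g p n₀) n₀ hn₀ hu)
        _ = Φ (uD g p n₀) n₀ * r ^ (k + 1) := by ring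

open scoped Classical in
/-- Counting valid digit tuples via a weight function. -/
lemma count_le (g r maxW : ℕ) (Φ : ℕ → ℕ → ℕ) (hΦ1 : ∀ u n, 1 ≤ Φ u n)
    (H : ∀ u n, 2 ≤ n → Nat.Prime u →
      (∑ e ∈ Finset.range g, if Nat.Prime (u + e * g ^ n) then Φ (u + e * g ^ n) (n + 1) else 0)
        ≤ r * Φ u n)
    (hmax : ∀ u n, Φ u n ≤ maxW) (N : ℕ) (hN : 2 ≤ N) :
    (Finset.univ.filter (fun d : Fin N → Fin g =>
        ∀ n ≤ N, 1 ≤ n → Nat.Prime (uD g (digitExt d) n))).card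
      ≤ g * g * (maxW * r ^ (N - 2)) := by
  have h0 : (0 : ℕ) < N := by omega
  have h1 : (1 : ℕ) < N := by omega
  have hmaps : ∀ d ∈ (Finset.univ.filter (fun d : Fin N → Fin g =>
      ∀ n ≤ N, 1 ≤ n → Nat.Prime (uD g (digitExt d) n))),
      (digitExt d 0, digitExt d 1) ∈ Finset.range g ×ˢ Finset.range g := by
    intro d _
    rw [Finset.mem_product, digitExt_lt d 0 h0, digitExt_lt d 1 h1]
    exact ⟨Finset.mem_range.mpr (d _).isLt, Finset.mem_range.mpr (d _).isLt⟩
  rw [Finset.card_eq_sum_card_fiberwise hmaps]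
  have hT : ∀ ab ∈ Finset.range g ×ˢ Finset.range g,
      ((Finset.univ.filter (fun d : Fin N → Fin g =>
        ∀ n ≤ N, 1 ≤ n → Nat.Prime (uD g (digitExt d) n))).filter
          (fun d => (digitExt d 0, digitExt d 1) = ab)).card ≤ maxW * r ^ (N - 2) := by
    intro ab _
    obtain ⟨a, b⟩ := ab
    refine le_trans (Finset.card_le_card ?_) (le_trans
      (core g r Φ hΦ1 H (N - 2) 2 N (by omega) le_rfl (fun i => if i = 0 then a else b))
      (Nat.mul_le_mul_right _ (hmax _ _)))
    intro d hd
    simp only [Finset.mem_filter, Finset.mem_univ, true_and] at hd ⊢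
    obtain ⟨hv, hab⟩ := hd
    obtain ⟨hA, hB⟩ := Prod.mk.injEq .. ▸ hab
    refine ⟨fun i hi => ?_, hv⟩
    interval_cases i
    · simpa using hA
    · simpa using hB
  refine le_trans (Finset.sum_le_sum hT) ?_
  rw [Finset.sum_const, smul_eq_mul, Finset.card_product, Finset.card_range]

open scoped Classical in
/-- The full prime-prefix count is bounded by the count of valid digit tuples. -/
lemma pcount_le_filter (g N : ℕ) (hg : g ≠ 2) :
    Pcount g N ≤ (Finset.univ.filter (fun d : Fin N → Fin g =>
      ∀ n ≤ N, 1 ≤ n → Nat.Prime (uD g (digitExt d) n))).card := by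
  unfold Pcount
  have key : ∀ d : Fin N → Fin g,
      (digitExt d (N - 1) ≠ 0 ∧ varpi g (digitExt d) N = N - (if g = 2 then 1 else 0)) →
      ∀ n ≤ N, 1 ≤ n → Nat.Prime (uD g (digitExt d) n) := by
    intro d hd n hnN hn1
    obtain ⟨-, hv⟩ := hd
    rw [if_neg hg, Nat.sub_zero] at hv
    unfold varpi at hv
    have hfil : (Finset.Icc 1 N).filter
        (fun m => Nat.Prime (∑ i ∈ Finset.range m, digitExt d i * g ^ i)) = Finset.Icc 1 N := by
      apply Finset.eq_of_subset_of_card_le (Finset.filter_subset _ _)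
      rw [Nat.card_Icc, hv]
      omega
    have hm : n ∈ Finset.Icc 1 N := Finset.mem_Icc.mpr ⟨hn1, hnN⟩
    rw [← hfil] at hm
    exact (Finset.mem_filter.mp hm).2
  refine le_trans (Nat.card_le_card_of_injective
    (fun x => (⟨x.1, by
      simp only [Finset.mem_coe, Finset.mem_filter, Finset.mem_univ, true_and]
      exact key x.1 x.2⟩ :
        {d : Fin N → Fin g // d ∈ (Finset.univ.filter (fun d : Fin N → Fin g =>
          ∀ n ≤ N, 1 ≤ n → Nat.Prime (uD g (digitExt d) n)))}))
    (by intro x y h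
        have hval := congrArg Subtype.val h
        exact Subtype.ext hval)) ?_
  rw [Nat.card_eq_fintype_card, Fintype.card_coe]

lemma pcount_le_pow (g N : ℕ) : Pcount g N ≤ g ^ N := by
  classical
  unfold Pcount
  refine le_trans (Nat.card_le_card_of_injective Subtype.val Subtype.val_injective) ?_
  rw [Nat.card_eq_fintype_card, Fintype.card_fun]
  simp

/-! ### Base 3 -/

/-- Weight function for base 3. -/
def Phi3 (u _n : ℕ) : ℕ := if u ≤ 3 then 2 else 1

lemma Phi3_pos : ∀ u n, 1 ≤ Phi3 u n := by
  intro u n; unfold Phi3; split <;> omega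

lemma Phi3_le : ∀ u n, Phi3 u n ≤ 2 := by
  intro u n; unfold Phi3; split <;> omega

lemma H3 : ∀ u n, 2 ≤ n → Nat.Prime u →
    (∑ e ∈ Finset.range 3, if Nat.Prime (u + e * 3 ^ n) then Phi3 (u + e * 3 ^ n) (n + 1) else 0)
      ≤ 2 * Phi3 u n := by
  intro u n hn hu
  have h9 : 9 ≤ 3 ^ n := by
    calc (9 : ℕ) = 3 ^ 2 := by norm_num
      _ ≤ 3 ^ n := Nat.pow_le_pow_right (by norm_num) hn
  have hu2 := hu.two_le
  rw [Finset.sum_range_succ, Finset.sum_range_succ, Finset.sum_range_succ,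
    Finset.sum_range_zero]
  by_cases hu3 : u ≤ 3
  · have hΦ : Phi3 u n = 2 := if_pos hu3
    have huv : u = 2 ∨ u = 3 := by omega
    rcases huv with rfl | rfl
    · have hT2 : ¬ Nat.Prime (2 + 2 * 3 ^ n) :=
        notPrime_of_div (k := 2) le_rfl ⟨1 + 3 ^ n, by ring⟩ (by omega)
      have hT1 : (if Nat.Prime (2 + 1 * 3 ^ n) then Phi3 (2 + 1 * 3 ^ n) (n + 1) else 0) ≤ 1 := by
        split
        · unfold Phi3; rw [if_neg (by omega)]
        · omega
      have hT0 : (if Nat.Prime (2 + 0 * 3 ^ n) then Phi3 (2 + 0 * 3 ^ n) (n + 1) else 0) ≤ 2 := by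
        split
        · exact Phi3_le _ _
        · omega
      rw [if_neg hT2, hΦ]
      omega
    · have d1 : (3 : ℕ) ∣ 3 + 1 * 3 ^ n := by
        have := dvd_pow_self 3 (show n ≠ 0 by omega)
        omega
      have d2 : (3 : ℕ) ∣ 3 + 2 * 3 ^ n := by
        have := dvd_pow_self 3 (show n ≠ 0 by omega)
        omega
      have hT1 : ¬ Nat.Prime (3 + 1 * 3 ^ n) := notPrime_of_div (by norm_num) d1 (by omega)
      have hT2 : ¬ Nat.Prime (3 + 2 * 3 ^ n) := notPrime_of_div (by norm_num) d2 (by omega)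
      have hT0 : (if Nat.Prime (3 + 0 * 3 ^ n) then Phi3 (3 + 0 * 3 ^ n) (n + 1) else 0) ≤ 2 := by
        split
        · exact Phi3_le _ _
        · omega
      rw [if_neg hT1, if_neg hT2, hΦ]
      omega
  · have hΦ : Phi3 u n = 1 := if_neg hu3
    have hodd : ¬ 2 ∣ u := by
      intro h
      rcases hu.eq_one_or_self_of_dvd 2 h with h' | h' <;> omega
    have h3odd : ¬ 2 ∣ (3 : ℕ) ^ n := by
      intro h
      have := Nat.Prime.dvd_of_dvd_pow Nat.prime_two h
      omega
    have hT1 : ¬ Nat.Prime (u + 1 * 3 ^ n) := by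
      apply notPrime_of_div (k := 2) le_rfl ?_ (by omega)
      omega
    have hT0 : (if Nat.Prime (u + 0 * 3 ^ n) then Phi3 (u + 0 * 3 ^ n) (n + 1) else 0) ≤ 1 := by
      split
      · unfold Phi3; rw [if_neg (by omega)]
      · omega
    have hT2 : (if Nat.Prime (u + 2 * 3 ^ n) then Phi3 (u + 2 * 3 ^ n) (n + 1) else 0) ≤ 1 := by
      split
      · unfold Phi3; rw [if_neg (by omega)]
      · omega
    rw [if_neg hT1, hΦ]
    omega

/-! ### Base 5 -/

/-- Weight function for base 5. -/
def Phi5 (u _n : ℕ) : ℕ := if u ≤ 4 then 4 else 1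

lemma Phi5_pos : ∀ u n, 1 ≤ Phi5 u n := by
  intro u n; unfold Phi5; split <;> omega

lemma Phi5_le : ∀ u n, Phi5 u n ≤ 4 := by
  intro u n; unfold Phi5; split <;> omega

lemma H5 : ∀ u n, 2 ≤ n → Nat.Prime u →
    (∑ e ∈ Finset.range 5, if Nat.Prime (u + e * 5 ^ n) then Phi5 (u + e * 5 ^ n) (n + 1) else 0)
      ≤ 2 * Phi5 u n := by
  intro u n hn hu
  have h25 : 25 ≤ 5 ^ n := by
    calc (25 : ℕ) = 5 ^ 2 := by norm_num
      _ ≤ 5 ^ n := Nat.pow_le_pow_right (by norm_num) hn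
  have hu2 := hu.two_le
  rw [Finset.sum_range_succ, Finset.sum_range_succ, Finset.sum_range_succ,
    Finset.sum_range_succ, Finset.sum_range_succ, Finset.sum_range_zero]
  by_cases hu4 : u ≤ 4
  · have hΦ : Phi5 u n = 4 := if_pos hu4
    have hT0 : (if Nat.Prime (u + 0 * 5 ^ n) then Phi5 (u + 0 * 5 ^ n) (n + 1) else 0) ≤ 4 := by
      split
      · exact Phi5_le _ _
      · omega
    have hTe : ∀ e, 1 ≤ e →
        (if Nat.Prime (u + e * 5 ^ n) then Phi5 (u + e * 5 ^ n) (n + 1) else 0) ≤ 1 := by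
      intro e he
      split
      · unfold Phi5
        rw [if_neg (by nlinarith)]
      · omega
    have h1 := hTe 1 le_rfl
    have h2 := hTe 2 (by omega)
    have h3 := hTe 3 (by omega)
    have h4 := hTe 4 (by omega)
    rw [hΦ]
    omega
  · have hΦ : Phi5 u n = 1 := if_neg hu4
    have hodd : ¬ 2 ∣ u := by
      intro h
      rcases hu.eq_one_or_self_of_dvd 2 h with h' | h' <;> omega
    have h5odd : ¬ 2 ∣ (5 : ℕ) ^ n := by
      intro h
      have := Nat.Prime.dvd_of_dvd_pow Nat.prime_two h
      omega
    have h3u : ¬ 3 ∣ u := by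
      intro h
      rcases hu.eq_one_or_self_of_dvd 3 h with h' | h' <;> omega
    have h35 : ¬ (3 : ℕ) ∣ 5 ^ n := by
      intro h
      have := Nat.Prime.dvd_of_dvd_pow (by norm_num : Nat.Prime 3) h
      omega
    have hT1 : ¬ Nat.Prime (u + 1 * 5 ^ n) := by
      apply notPrime_of_div (k := 2) le_rfl ?_ (by omega)
      omega
    have hT3 : ¬ Nat.Prime (u + 3 * 5 ^ n) := by
      apply notPrime_of_div (k := 2) le_rfl ?_ (by omega)
      omega
    have hT0 : (if Nat.Prime (u + 0 * 5 ^ n) then Phi5 (u + 0 * 5 ^ n) (n + 1) else 0) ≤ 1 := by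
      split
      · unfold Phi5; rw [if_neg (by omega)]
      · omega
    have hT2b : (if Nat.Prime (u + 2 * 5 ^ n) then Phi5 (u + 2 * 5 ^ n) (n + 1) else 0) ≤ 1 := by
      split
      · unfold Phi5; rw [if_neg (by omega)]
      · omega
    have hT4b : (if Nat.Prime (u + 4 * 5 ^ n) then Phi5 (u + 4 * 5 ^ n) (n + 1) else 0) ≤ 1 := by
      split
      · unfold Phi5; rw [if_neg (by omega)]
      · omega
    have key : 3 ∣ (u + 2 * 5 ^ n) ∨ 3 ∣ (u + 4 * 5 ^ n) := by
      rcases (by omega : u % 3 = 1 ∨ u % 3 = 2) with h | h <;>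
        rcases (by omega : 5 ^ n % 3 = 1 ∨ 5 ^ n % 3 = 2) with h' | h'
      · left; omega
      · right; omega
      · right; omega
      · left; omega
    rcases key with hk | hk
    · have hT2 : ¬ Nat.Prime (u + 2 * 5 ^ n) := notPrime_of_div (by norm_num) hk (by omega)
      rw [if_neg hT1, if_neg hT3, if_neg hT2, hΦ]
      omega
    · have hT4 : ¬ Nat.Prime (u + 4 * 5 ^ n) := notPrime_of_div (by norm_num) hk (by omega)
      rw [if_neg hT1, if_neg hT3, if_neg hT4, hΦ]
      omega

/-! ### Base 10 -/

/-- Weight table for base 10 (indexed by residues mod 273 = 3 · 7 · 13). -/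
def wtab : List ℕ := [6, 5, 5, 6, 4, 4, 6, 6, 4, 6, 4, 4, 6, 6, 6, 6, 6, 5, 6, 4, 4, 6, 4, 4, 6, 4, 6, 6, 6, 5, 6, 5, 5, 6, 5, 6, 6, 6, 6, 6, 5, 5, 6, 4, 4, 6, 4, 4, 6, 6, 4, 6, 6, 5, 6, 5, 6, 6, 5, 5, 6, 4, 4, 6, 4, 6, 6, 5, 4, 6, 6, 5, 6, 5, 5, 6, 5, 6, 6, 6, 6, 6, 5, 5, 6, 5, 5, 6, 5, 4, 6, 6, 5, 6, 5, 4, 6, 4, 6, 6, 5, 5, 6, 4, 6, 6, 5, 5, 6, 5, 4, 6, 6, 5, 6, 5, 5, 6, 5, 6, 6, 5, 5, 6, 4, 4, 6, 4, 4, 6, 6, 4, 6, 6, 4, 6, 5, 5, 6, 4, 6, 6, 5, 6, 6, 5, 5, 6, 5, 5, 6, 5, 4, 6, 6, 5, 6, 5, 5, 6, 5, 6, 6, 5, 5, 6, 4, 4, 6, 6, 5, 6, 5, 4, 6, 6, 5, 6, 5, 5, 6, 5, 6, 6, 6, 6, 6, 5, 5, 6, 5, 5, 6, 5, 4, 6,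 6, 5, 6, 4, 4, 6, 4, 6, 6, 5, 5, 6, 6, 5, 6, 5, 4, 6, 4, 4, 6, 6, 4, 6, 4, 6, 6, 5, 6, 6, 6, 6, 6, 5, 5, 6, 5, 5, 6, 5, 4, 6, 6, 4, 6, 4, 4, 6, 4, 6, 6, 6, 6, 6, 5, 5, 6, 5, 5, 6, 4, 4, 6, 6, 6, 6, 5, 5, 6, 5, 6, 6, 6, 6, 6, 5, 5]

/-- Weight of a residue class mod 273. -/
def wt (b : ℕ) : ℕ := wtab.getD b 0

/-- Weight function for base 10. -/
def Phi10 (u n : ℕ) : ℕ := if Nat.gcd u 273 = 1 then wt ((u * 82 ^ n) % 273) else 11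

lemma wt_le : ∀ b < 273, wt b ≤ 6 := by decide

lemma wt_pos : ∀ b < 273, 1 ≤ wt b := by decide

lemma tableCheck : ∀ b < 273, Nat.gcd b 273 = 1 →
    (∑ e ∈ Finset.range 10, if Nat.gcd (b + e) 273 = 1 then wt (((b + e) * 82) % 273) else 0)
      ≤ 6 * wt b := by decide

lemma Phi10_pos : ∀ u n, 1 ≤ Phi10 u n := by
  intro u n
  unfold Phi10
  split
  · exact wt_pos _ (Nat.mod_lt _ (by norm_num))
  · omega

lemma Phi10_le : ∀ u n, Phi10 u n ≤ 11 := by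
  intro u n
  unfold Phi10
  split
  · exact le_trans (wt_le _ (Nat.mod_lt _ (by norm_num))) (by norm_num)
  · omega

lemma prime_cop {v : ℕ} (hv : v.Prime) (h13 : 13 < v) : Nat.gcd v 273 = 1 := by
  have hnd : ¬ v ∣ 273 := by
    intro hd
    have hd' : v ∣ 3 * (7 * 13) := by
      have : (273 : ℕ) = 3 * (7 * 13) := by norm_num
      rwa [this] at hd
    rcases (Nat.Prime.dvd_mul hv).mp hd' with h | h
    · exact absurd (Nat.le_of_dvd (by norm_num) h) (by omega)
    · rcases (Nat.Prime.dvd_mul hv).mp h with h' | h' <;>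
        exact absurd (Nat.le_of_dvd (by norm_num) h') (by omega)
  exact (Nat.Prime.coprime_iff_not_dvd hv).mpr hnd

lemma cop82 : Nat.Coprime 82 273 := by decide

lemma H10 : ∀ u n, 2 ≤ n → Nat.Prime u →
    (∑ e ∈ Finset.range 10,
        if Nat.Prime (u + e * 10 ^ n) then Phi10 (u + e * 10 ^ n) (n + 1) else 0)
      ≤ 6 * Phi10 u n := by
  intro u n hn hu
  have h100 : 100 ≤ 10 ^ n := by
    calc (100 : ℕ) = 10 ^ 2 := by norm_num
      _ ≤ 10 ^ n := Nat.pow_le_pow_right (by norm_num) hn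
  have hu2 := hu.two_le
  have hcop' : ∀ e, 1 ≤ e → Nat.Prime (u + e * 10 ^ n) → Nat.gcd (u + e * 10 ^ n) 273 = 1 := by
    intro e he hp
    have h100e : 100 ≤ e * 10 ^ n := le_trans h100 (Nat.le_mul_of_pos_left _ (by omega))
    exact prime_cop hp (by omega)
  by_cases hug : Nat.gcd u 273 = 1
  · have hΦu : Phi10 u n = wt ((u * 82 ^ n) % 273) := if_pos hug
    have hblt : (u * 82 ^ n) % 273 < 273 := Nat.mod_lt _ (by norm_num)
    have h820 : (820 : ℕ) ≡ 1 [MOD 273] := by decide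
    have hbmod : (u * 82 ^ n) % 273 ≡ u * 82 ^ n [MOD 273] := Nat.mod_modEq _ _
    have hbg : Nat.gcd ((u * 82 ^ n) % 273) 273 = 1 := by
      have hcu : Nat.Coprime (u * 82 ^ n) 273 := Nat.Coprime.mul hug (cop82.pow_left n)
      rw [hbmod.gcd_eq]
      exact hcu
    have hterm : ∀ e ∈ Finset.range 10,
        (if Nat.Prime (u + e * 10 ^ n) then Phi10 (u + e * 10 ^ n) (n + 1) else 0)
          ≤ (if Nat.gcd ((u * 82 ^ n) % 273 + e) 273 = 1 then
              wt ((((u * 82 ^ n) % 273 + e) * 82) % 273) else 0) := by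
      intro e _
      by_cases hp : Nat.Prime (u + e * 10 ^ n)
      · rw [if_pos hp]
        have hcopu' : Nat.gcd (u + e * 10 ^ n) 273 = 1 := by
          rcases Nat.eq_zero_or_pos e with rfl | hepos
          · simpa using hug
          · exact hcop' e hepos hp
        have h1 : (u + e * 10 ^ n) * 82 ^ (n + 1)
            = (u * 82 ^ n) * 82 + (e * 820 ^ n) * 82 := by
          rw [show (820 : ℕ) = 10 * 82 from by norm_num, mul_pow]
          ring
        have hmodeq : (u + e * 10 ^ n) * 82 ^ (n + 1)
            ≡ ((u * 82 ^ n) % 273 + e) * 82 [MOD 273] := by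
          rw [h1]
          have h2 : (u * 82 ^ n) * 82 + (e * 820 ^ n) * 82
              ≡ ((u * 82 ^ n) % 273) * 82 + (e * 1 ^ n) * 82 [MOD 273] :=
            Nat.ModEq.add (hbmod.symm.mul_right 82) ((Nat.ModEq.mul_left e
              (Nat.ModEq.pow n h820)).mul_right 82)
          have h3 : ((u * 82 ^ n) % 273) * 82 + (e * 1 ^ n) * 82
              = ((u * 82 ^ n) % 273 + e) * 82 := by ring
          rw [← h3]
          exact h2
        have hgbe : Nat.gcd ((u * 82 ^ n) % 273 + e) 273 = 1 := by
          have hc1 : Nat.Coprime ((u + e * 10 ^ n) * 82 ^ (n + 1)) 273 :=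
            Nat.Coprime.mul hcopu' (cop82.pow_left (n + 1))
          have hc2 : Nat.gcd (((u * 82 ^ n) % 273 + e) * 82) 273 = 1 := by
            rw [← hmodeq.gcd_eq]
            exact hc1
          exact Nat.Coprime.coprime_dvd_left ⟨82, rfl⟩ hc2
        rw [if_pos hgbe]
        unfold Phi10
        rw [if_pos hcopu']
        have heq : ((u + e * 10 ^ n) * 82 ^ (n + 1)) % 273
            = (((u * 82 ^ n) % 273 + e) * 82) % 273 := hmodeq
        rw [heq]
      · rw [if_neg hp]
        exact Nat.zero_le _
    refine le_trans (Finset.sum_le_sum hterm) ?_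
    rw [hΦu]
    exact tableCheck _ hblt hbg
  · have hΦu : Phi10 u n = 11 := if_neg hug
    rw [hΦu]
    have hbound : ∀ e ∈ Finset.range 10,
        (if Nat.Prime (u + e * 10 ^ n) then Phi10 (u + e * 10 ^ n) (n + 1) else 0)
          ≤ (if e = 0 then 11 else 6) := by
      intro e _
      by_cases hp : Nat.Prime (u + e * 10 ^ n)
      · rw [if_pos hp]
        rcases Nat.eq_zero_or_pos e with rfl | hepos
        · rw [if_pos rfl]
          exact Phi10_le _ _
        · rw [if_neg (by omega)]
          have hg := hcop' e hepos hp
          unfold Phi10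
          rw [if_pos hg]
          exact wt_le _ (Nat.mod_lt _ (by norm_num))
      · rw [if_neg hp]
        split <;> omega
    refine le_trans (Finset.sum_le_sum hbound) ?_
    norm_num [Finset.sum_range_succ]

/-! ### Per-base bounds -/

lemma P3bound (N : ℕ) (hN : 1 ≤ N) : Pcount 3 N ≤ 18 * 2 ^ N := by
  rcases Nat.lt_or_ge N 2 with h | h
  · have hN1 : N = 1 := by omega
    subst hN1
    calc Pcount 3 1 ≤ 3 ^ 1 := pcount_le_pow 3 1
      _ ≤ 18 * 2 ^ 1 := by norm_num
  · calc Pcount 3 N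
        ≤ _ := pcount_le_filter 3 N (by norm_num)
      _ ≤ 3 * 3 * (2 * 2 ^ (N - 2)) := count_le 3 2 2 Phi3 Phi3_pos H3 Phi3_le N h
      _ = 18 * 2 ^ (N - 2) := by ring
      _ ≤ 18 * 2 ^ N := Nat.mul_le_mul_left 18 (Nat.pow_le_pow_right (by norm_num) (by omega))

lemma P5bound (N : ℕ) (hN : 1 ≤ N) : Pcount 5 N ≤ 100 * 2 ^ N := by
  rcases Nat.lt_or_ge N 2 with h | h
  · have hN1 : N = 1 := by omega
    subst hN1
    calc Pcount 5 1 ≤ 5 ^ 1 := pcount_le_pow 5 1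
      _ ≤ 100 * 2 ^ 1 := by norm_num
  · calc Pcount 5 N
        ≤ _ := pcount_le_filter 5 N (by norm_num)
      _ ≤ 5 * 5 * (4 * 2 ^ (N - 2)) := count_le 5 2 4 Phi5 Phi5_pos H5 Phi5_le N h
      _ = 100 * 2 ^ (N - 2) := by ring
      _ ≤ 100 * 2 ^ N := Nat.mul_le_mul_left 100 (Nat.pow_le_pow_right (by norm_num) (by omega))

lemma P10bound (N : ℕ) (hN : 1 ≤ N) : Pcount 10 N ≤ 1100 * 6 ^ N := by
  rcases Nat.lt_or_ge N 2 with h | h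
  · have hN1 : N = 1 := by omega
    subst hN1
    calc Pcount 10 1 ≤ 10 ^ 1 := pcount_le_pow 10 1
      _ ≤ 1100 * 6 ^ 1 := by norm_num
  · calc Pcount 10 N
        ≤ _ := pcount_le_filter 10 N (by norm_num)
      _ ≤ 10 * 10 * (11 * 6 ^ (N - 2)) := count_le 10 6 11 Phi10 Phi10_pos H10 Phi10_le N h
      _ = 1100 * 6 ^ (N - 2) := by ring
      _ ≤ 1100 * 6 ^ N := Nat.mul_le_mul_left 1100 (Nat.pow_le_pow_right (by norm_num) (by omega))

theorem stmt_6 :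
    ∃ C₃ C₅ C₁₀ : ℝ, ∀ N : ℕ, 1 ≤ N →
      (Pcount 3 N : ℝ) ≤ C₃ * 2 ^ N ∧
      (Pcount 5 N : ℝ) ≤ C₅ * 2 ^ N ∧
      (Pcount 10 N : ℝ) ≤ C₁₀ * 6 ^ N := by
  refine ⟨18, 100, 1100, fun N hN => ⟨?_, ?_, ?_⟩⟩
  · calc (Pcount 3 N : ℝ) ≤ ((18 * 2 ^ N : ℕ) : ℝ) := Nat.cast_le.mpr (P3bound N hN)
      _ = 18 * 2 ^ N := by push_cast; ring
  · calc (Pcount 5 N : ℝ) ≤ ((100 * 2 ^ N : ℕ) : ℝ) := Nat.cast_le.mpr (P5bound N hN)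
      _ = 100 * 2 ^ N := by push_cast; ring
  · calc (Pcount 10 N : ℝ) ≤ ((1100 * 6 ^ N : ℕ) : ℝ) := Nat.cast_le.mpr (P10bound N hN)
      _ = 1100 * 6 ^ N := by push_cast; ring
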